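/- arXiv:1909.02883 — 2 statements merged into one kernel-verified Lean document; each statement's English description precedes it below -/
import Mathlib

section
/- Let γ_τ = τ^{-1} Σ_{n=1}^τ δ_n on ℤ and let η be a Schwartz function on ℝ with \widecheck{η} its inverse Fourier transform, η_s(ξ) = η(8^s ξ). If 8^s ≤ τ, then for |y| ≤ 4τ one has |(γ_τ ∗ \widecheck{η_s})(y)| ≤ C τ^{-1}, and for 2^k τ < |y| ≤ 2^{k+1} τ with k ≥ 2 one has |(γ_τ ∗ \widecheck{η_s})(y)| ≤ C 2^{-2k} τ^{-1}, where C depends only on η. -/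
/-!
With `m = 8 ^ s`, the decay of `η^∨` bounds each rescaled term `m⁻¹ |η^∨(u / m)|` by `C₀` times
the Poisson kernel `m / (m ^ 2 + u ^ 2) ≤ 2m / (m + |u|) ^ 2`. Summed over distinct integers `u`
this is `O(1)`, because `∑ₙ (m + n + 1)⁻² ≤ m⁻¹` telescopes; hence the bound `C / τ` near the
origin. When `2 ^ k τ < |y|`, each of the `τ` terms has `|y - z| ≥ 2 ^ (k - 1) τ`, so the sum is
at most `4 m / (2 ^ (2k) τ) ≤ 4 / 2 ^ (2k)` since `m ≤ τ`.
-/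

open Finset

theorem sum_range_inv_sq_add_succ_le {m : ℝ} (hm : 0 < m) (N : ℕ) :
    ∑ n ∈ range N, ((m + (n + 1)) ^ 2)⁻¹ ≤ m⁻¹ - (m + N)⁻¹ := by
  induction N with
  | zero => simp
  | succ N ih =>
    have hN : 0 < m + N := by positivity
    have step : ((m + (N + 1)) ^ 2)⁻¹ ≤ (m + N)⁻¹ - (m + (N + 1))⁻¹ := by
      rw [inv_sub_inv hN.ne' (by positivity), add_sub_add_left_eq_sub, add_sub_cancel_left,
        ← one_div, sq]
      gcongr
      linarith
    rw [sum_range_succ]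
    push_cast
    linarith

theorem sum_inv_sq_add_le {m : ℝ} (hm : 0 < m) (T : Finset ℕ) :
    ∑ n ∈ T, ((m + n) ^ 2)⁻¹ ≤ (m ^ 2)⁻¹ + m⁻¹ := by
  have hT : T ⊆ range (T.sup id + 1) := fun n hn =>
    mem_range.2 (Nat.lt_succ_of_le (le_sup (f := id) hn))
  calc ∑ n ∈ T, ((m + n) ^ 2)⁻¹
      ≤ ∑ n ∈ range (T.sup id + 1), ((m + n) ^ 2)⁻¹ :=
        sum_le_sum_of_subset_of_nonneg hT fun _ _ _ => by positivity
    _ ≤ (m ^ 2)⁻¹ + m⁻¹ := by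
        rw [sum_range_succ']
        have := sum_range_inv_sq_add_succ_le hm (T.sup id)
        have : 0 ≤ (m + (T.sup id : ℕ))⁻¹ := by positivity
        push_cast
        simp only [add_zero]
        linarith

theorem sum_comp_natAbs_le {f : ℕ → ℝ} (hf : ∀ n, 0 ≤ f n) (S : Finset ℤ) :
    ∑ d ∈ S, f d.natAbs ≤ 2 * ∑ n ∈ S.image Int.natAbs, f n := by
  rw [sum_comp, mul_sum]
  refine sum_le_sum fun n _ => ?_
  have fiber : {d ∈ S | d.natAbs = n} ⊆ {(n : ℤ), -(n : ℤ)} := fun d hd => by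
    obtain ⟨-, rfl⟩ := mem_filter.1 hd
    simpa using d.natAbs_eq
  rw [nsmul_eq_mul]
  gcongr
  · exact hf n
  · exact_mod_cast (card_le_card fiber).trans card_le_two

theorem sum_div_sq_add_sq_le {m : ℝ} (hm : 0 < m) (S : Finset ℤ) :
    ∑ d ∈ S, m / (m ^ 2 + (d : ℝ) ^ 2) ≤ 4 / m + 4 := by
  have term (d : ℤ) : m / (m ^ 2 + (d : ℝ) ^ 2) ≤ 2 * m * ((m + d.natAbs) ^ 2)⁻¹ := by
    have hd : (d : ℝ) ^ 2 = (d.natAbs : ℝ) ^ 2 := by simp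
    rw [hd, ← div_eq_mul_inv, div_le_div_iff₀ (by positivity) (by positivity)]
    nlinarith [sq_nonneg (m - d.natAbs)]
  calc ∑ d ∈ S, m / (m ^ 2 + (d : ℝ) ^ 2)
      ≤ ∑ d ∈ S, 2 * m * ((m + d.natAbs) ^ 2)⁻¹ := sum_le_sum fun d _ => term d
    _ ≤ 2 * ∑ n ∈ S.image Int.natAbs, 2 * m * ((m + n) ^ 2)⁻¹ :=
        sum_comp_natAbs_le (f := fun n : ℕ => 2 * m * ((m + n) ^ 2)⁻¹)
          (fun _ => by positivity) S
    _ ≤ 2 * (2 * m * ((m ^ 2)⁻¹ + m⁻¹)) := by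
        rw [← mul_sum]
        gcongr
        exact sum_inv_sq_add_le hm _
    _ = 4 / m + 4 := by field_simp; ring

theorem abs_inv_mul_comp_div_le {η : ℝ → ℝ} {C₀ : ℝ} (hdecay : ∀ t, |η t| ≤ C₀ / (1 + t ^ 2))
    {m : ℝ} (hm : 0 < m) (u : ℝ) : |m⁻¹ * η (u / m)| ≤ C₀ * (m / (m ^ 2 + u ^ 2)) := by
  have h : m⁻¹ * (C₀ / (1 + (u / m) ^ 2)) = C₀ * (m / (m ^ 2 + u ^ 2)) := by
    field_simp
  rw [abs_mul, abs_inv, abs_of_pos hm, ← h]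
  gcongr
  exact hdecay _

theorem abs_average_le {η : ℝ → ℝ} {C₀ : ℝ} (hdecay : ∀ t, |η t| ≤ C₀ / (1 + t ^ 2))
    {m : ℝ} (hm : 0 < m) (s : Finset ℕ) (τ : ℕ) (y : ℝ) :
    |(τ : ℝ)⁻¹ * ∑ z ∈ s, m⁻¹ * η ((y - z) / m)| ≤
      C₀ * ((τ : ℝ)⁻¹ * ∑ z ∈ s, m / (m ^ 2 + (y - z) ^ 2)) := by
  rw [abs_mul, abs_inv, Nat.abs_cast, mul_left_comm, mul_sum]
  gcongr
  exact (abs_sum_le_sum_abs _ _).trans (sum_le_sum fun z _ => abs_inv_mul_comp_div_le hdecay hm _)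

theorem sum_Icc_div_sq_add_sq_le {m : ℝ} (hm : 0 < m) (τ : ℕ) (y : ℤ) :
    ∑ z ∈ Icc 1 τ, m / (m ^ 2 + ((y : ℝ) - z) ^ 2) ≤ 4 / m + 4 := by
  have hinj : Set.InjOn (fun z : ℕ => y - z) (Icc 1 τ) := fun a _ b _ h => by
    simpa using h
  calc ∑ z ∈ Icc 1 τ, m / (m ^ 2 + ((y : ℝ) - z) ^ 2)
      = ∑ d ∈ (Icc 1 τ).image (fun z : ℕ => y - z), m / (m ^ 2 + (d : ℝ) ^ 2) := by
        rw [sum_image hinj]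
        push_cast
        rfl
    _ ≤ 4 / m + 4 := sum_div_sq_add_sq_le hm _

theorem sum_Icc_div_sq_add_sq_le_of_lt_abs {m a : ℝ} {τ : ℕ} {y : ℝ} (hm : 0 < m)
    (hmτ : m ≤ τ) (ha : 2 ≤ a) (hy : a * τ < |y|) :
    ∑ z ∈ Icc 1 τ, m / (m ^ 2 + (y - z) ^ 2) ≤ 4 / a ^ 2 := by
  have hτ : (0 : ℝ) < τ := hm.trans_le hmτ
  have term : ∀ z ∈ Icc 1 τ, m / (m ^ 2 + (y - z) ^ 2) ≤ m / (a * τ / 2) ^ 2 := by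
    intro z hz
    have hz : (z : ℝ) ≤ τ := by exact_mod_cast (mem_Icc.1 hz).2
    have hfar : a * τ / 2 ≤ |y - z| := by
      have := abs_sub_abs_le_abs_sub y z
      rw [Nat.abs_cast] at this
      nlinarith
    have hsq := pow_le_pow_left₀ (by positivity) hfar 2
    rw [sq_abs] at hsq
    gcongr
    nlinarith [sq_nonneg m]
  calc ∑ z ∈ Icc 1 τ, m / (m ^ 2 + (y - z) ^ 2)
      ≤ τ * (m / (a * τ / 2) ^ 2) := by
        simpa using sum_le_card_nsmul _ _ _ term
    _ = 4 / a ^ 2 * (m / τ) := by field_simp; ring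
    _ ≤ 4 / a ^ 2 := mul_le_of_le_one_right (by positivity) ((div_le_one hτ).2 hmτ)

/-- Kernel estimates for γ_τ ∗ η_s^∨ on ℤ, where η_s^∨(y) = 8^{-s} η^∨(y/8^s)
and η^∨ satisfies the decay |η^∨(t)| ≤ C₀(1+t²)⁻¹.  If 8^s ≤ τ then
|(γ_τ ∗ η_s^∨)(y)| ≤ C/τ for |y| ≤ 4τ, and ≤ C 2^{-2k}/τ for
2^k τ < |y| ≤ 2^{k+1} τ, k ≥ 2, with C depending only on η. -/
theorem kernel_decay (ηinv : ℝ → ℝ) (C₀ : ℝ) (hC₀ : 0 < C₀)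
    (hdecay : ∀ t : ℝ, |ηinv t| ≤ C₀ / (1 + t ^ 2)) :
    ∃ C : ℝ, 0 < C ∧ ∀ τ s : ℕ, 0 < τ → 8 ^ s ≤ τ →
      (∀ y : ℤ, |y| ≤ 4 * (τ : ℤ) →
        |(τ : ℝ)⁻¹ * ∑ z ∈ Finset.Icc 1 τ,
            ((8 : ℝ) ^ s)⁻¹ * ηinv (((y : ℝ) - (z : ℝ)) / (8 : ℝ) ^ s)| ≤
          C / τ) ∧
      (∀ k : ℕ, 2 ≤ k → ∀ y : ℤ,
        2 ^ k * (τ : ℤ) < |y| → |y| ≤ 2 ^ (k + 1) * (τ : ℤ) →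
        |(τ : ℝ)⁻¹ * ∑ z ∈ Finset.Icc 1 τ,
            ((8 : ℝ) ^ s)⁻¹ * ηinv (((y : ℝ) - (z : ℝ)) / (8 : ℝ) ^ s)| ≤
          C * ((2 : ℝ) ^ (2 * k))⁻¹ / τ) := by
  refine ⟨8 * C₀, by positivity, fun τ s _ hsτ => ⟨fun y _ => ?_, fun k hk y hy _ => ?_⟩⟩
  all_goals refine (abs_average_le hdecay (by positivity) _ τ y).trans ?_
  · have hsum := sum_Icc_div_sq_add_sq_le (by positivity : (0 : ℝ) < 8 ^ s) τ y
    have : 4 / (8 : ℝ) ^ s ≤ 4 := div_le_self (by norm_num) (one_le_pow₀ (by norm_num))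
    calc C₀ * ((τ : ℝ)⁻¹ * _) ≤ C₀ * ((τ : ℝ)⁻¹ * 8) := by gcongr; linarith
      _ = 8 * C₀ / τ := by ring
  · have ha : (2 : ℝ) ≤ 2 ^ k := le_self_pow₀ (by norm_num) (by omega)
    have hmτ : (8 : ℝ) ^ s ≤ τ := by exact_mod_cast hsτ
    have hy' : (2 : ℝ) ^ k * τ < |(y : ℝ)| := by exact_mod_cast hy
    calc C₀ * ((τ : ℝ)⁻¹ * _) ≤ C₀ * ((τ : ℝ)⁻¹ * (4 / (2 ^ k) ^ 2)) := by
          gcongr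
          exact sum_Icc_div_sq_add_sq_le_of_lt_abs (by positivity) hmτ ha hy'
      _ = 4 * C₀ * ((2 : ℝ) ^ (2 * k))⁻¹ / τ := by rw [mul_comm 2 k, pow_mul]; ring
      _ ≤ 8 * C₀ * ((2 : ℝ) ^ (2 * k))⁻¹ / τ := by gcongr; norm_num
end

section
/- Let A_N f(x) = ϑ(N)^{-1} Σ_{p odd prime ≤ N} (log p) f(x−p), and let S_N f(x) = (log N / N) Σ_{p odd prime ≤ N} f(x−p) be the unweighted (log-normalized) average. Then for every nonnegative function f on ℤ and every x, sup_N S_N f(x) ≤ C sup_N A_N f(x) for an absolute constant C. -/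
/-- Chebyshev's theta function ϑ(N) = Σ_{p prime ≤ N} log p. -/
noncomputable def chebTheta (N : ℕ) : ℝ :=
  ∑ p ∈ (Finset.range (N + 1)).filter Nat.Prime, Real.log p

/-- The logarithmically weighted average along the odd primes:
A_N f(x) = ϑ(N)⁻¹ Σ_{p odd prime ≤ N} (log p) f(x - p). -/
noncomputable def primeAvg (N : ℕ) (f : ℤ → ℝ) (x : ℤ) : ℝ :=
  (chebTheta N)⁻¹ *
    ∑ p ∈ (Finset.range (N + 1)).filter (fun p => p.Prime ∧ p ≠ 2),
      Real.log p * f (x - p)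

/-- The unweighted log-normalized average along the odd primes:
S_N f(x) = (log N / N) Σ_{p odd prime ≤ N} f(x - p). -/
noncomputable def unweightedPrimeAvg (N : ℕ) (f : ℤ → ℝ) (x : ℤ) : ℝ :=
  (Real.log N / N) *
    ∑ p ∈ (Finset.range (N + 1)).filter (fun p => p.Prime ∧ p ≠ 2), f (x - p)

/-!
Primes `p > √N` have `log p ≥ (log N) / 2`, so on them the unweighted sum is at most
`2 / log N` times the weighted one, which is `ϑ(N) A_N f(x) ≤ N log 4 · sup A`. Primes
`3 ≤ p ≤ √N` have weight `log p ≥ log 3 > 1`, so their unweighted sum is at most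
`ϑ(√N) A_{√N} f(x) ≤ √N log 4 · sup A`, which the factor `log N / N` makes negligible.
-/

open Finset Real

abbrev oddPrimesLE (n : ℕ) : Finset ℕ :=
  (range (n + 1)).filter (fun p => p.Prime ∧ p ≠ 2)

lemma mem_oddPrimesLE {n p : ℕ} : p ∈ oddPrimesLE n ↔ p ≤ n ∧ p.Prime ∧ p ≠ 2 := by
  simp

lemma oddPrimesLE_mono {m n : ℕ} (h : m ≤ n) : oddPrimesLE m ⊆ oddPrimesLE n :=
  filter_subset_filter _ (range_mono (by omega))

lemma chebTheta_pos {n : ℕ} (hn : 2 ≤ n) : 0 < chebTheta n := by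
  have h2 : 2 ∈ (range (n + 1)).filter Nat.Prime :=
    mem_filter.2 ⟨mem_range.2 (by omega), Nat.prime_two⟩
  calc 0 < log ((2 : ℕ) : ℝ) := log_pos (by norm_num)
    _ ≤ chebTheta n :=
      single_le_sum (f := fun p : ℕ => log p) (fun p _ => log_natCast_nonneg p) h2

lemma chebTheta_le (n : ℕ) : chebTheta n ≤ log 4 * n := by
  calc chebTheta n = log (primorial n) := by
        rw [chebTheta, primorial, Nat.cast_prod, log_prod]
        exact fun p hp => Nat.cast_ne_zero.2 (mem_filter.1 hp).2.ne_zero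
    _ ≤ log ((4 : ℝ) ^ n) :=
      log_le_log (by exact_mod_cast primorial_pos n) (by exact_mod_cast primorial_le_four_pow n)
    _ = log 4 * n := by rw [log_pow, mul_comm]

lemma primeAvg_nonneg {f : ℤ → ℝ} (hf : ∀ x, 0 ≤ f x) (n : ℕ) (x : ℤ) :
    0 ≤ primeAvg n f x :=
  mul_nonneg (inv_nonneg.2 (sum_nonneg fun p _ => log_natCast_nonneg p))
    (sum_nonneg fun p _ => mul_nonneg (log_natCast_nonneg p) (hf _))

lemma sum_log_mul_eq_chebTheta_mul_primeAvg {n : ℕ} (hn : 2 ≤ n) (f : ℤ → ℝ) (x : ℤ) :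
    ∑ p ∈ oddPrimesLE n, log p * f (x - p) = chebTheta n * primeAvg n f x := by
  rw [primeAvg, mul_inv_cancel_left₀ (chebTheta_pos hn).ne']

lemma mul_sum_le_sum_mul_of_le {ι : Type*} {s : Finset ι} {a : ℝ} {w g : ι → ℝ}
    (hw : ∀ i ∈ s, a ≤ w i) (hg : ∀ i ∈ s, 0 ≤ g i) :
    a * ∑ i ∈ s, g i ≤ ∑ i ∈ s, w i * g i := by
  rw [mul_sum]
  exact sum_le_sum fun i hi => mul_le_mul_of_nonneg_right (hw i hi) (hg i hi)

lemma mul_sum_le_of_le_log {f : ℤ → ℝ} (hf : ∀ x, 0 ≤ f x) {x : ℤ} {n : ℕ} (hn : 2 ≤ n)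
    {c : ℝ} (hc : primeAvg n f x ≤ c) {s : Finset ℕ} (hs : s ⊆ oddPrimesLE n) {a : ℝ}
    (ha : ∀ p ∈ s, a ≤ log p) :
    a * ∑ p ∈ s, f (x - p) ≤ log 4 * n * c :=
  calc a * ∑ p ∈ s, f (x - p) ≤ ∑ p ∈ s, log p * f (x - p) :=
        mul_sum_le_sum_mul_of_le ha fun _ _ => hf _
    _ ≤ ∑ p ∈ oddPrimesLE n, log p * f (x - p) :=
        sum_le_sum_of_subset_of_nonneg hs fun p _ _ => mul_nonneg (log_natCast_nonneg p) (hf _)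
    _ = chebTheta n * primeAvg n f x := sum_log_mul_eq_chebTheta_mul_primeAvg hn f x
    _ ≤ chebTheta n * c := mul_le_mul_of_nonneg_left hc (chebTheta_pos hn).le
    _ ≤ log 4 * n * c :=
        mul_le_mul_of_nonneg_right (chebTheta_le n) ((primeAvg_nonneg hf n x).trans hc)

lemma filter_mul_self_le_subset (n : ℕ) :
    (oddPrimesLE n).filter (fun p => p * p ≤ n) ⊆ oddPrimesLE (Nat.sqrt n) := by
  intro p hp
  obtain ⟨hp, hpn⟩ := mem_filter.1 hp
  exact mem_oddPrimesLE.2 ⟨Nat.le_sqrt.2 hpn, (mem_oddPrimesLE.1 hp).2⟩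

lemma one_le_log_of_mem_oddPrimesLE {n p : ℕ} (hp : p ∈ oddPrimesLE n) : 1 ≤ log p := by
  obtain ⟨-, hp, hp2⟩ := mem_oddPrimesLE.1 hp
  have h3 : (3 : ℝ) ≤ p := by exact_mod_cast (show 3 ≤ p by have := hp.two_le; omega)
  linarith [log_three_gt_d9, log_le_log (by norm_num) h3]

lemma log_le_two_mul_log_of_lt_mul_self {n p : ℕ} (hn : 0 < n) (h : n < p * p) :
    log n ≤ 2 * log p := by
  calc log n ≤ log ((p : ℝ) ^ 2) :=
        log_le_log (by exact_mod_cast hn) (by rw [sq]; exact_mod_cast h.le)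
    _ = 2 * log p := by rw [log_pow]; norm_num

lemma log_mul_max_three_sqrt_le {n : ℕ} (hn : 0 < n) :
    log n * (max 3 (Nat.sqrt n) : ℕ) ≤ 6 * n := by
  set s := Nat.sqrt n
  have hs : 1 ≤ s := Nat.le_sqrt.2 hn
  have hlog : log n ≤ 2 * s :=
    calc log n ≤ 2 * log ((s + 1 : ℕ) : ℝ) :=
          log_le_two_mul_log_of_lt_mul_self hn (Nat.lt_succ_sqrt n)
      _ ≤ 2 * s := by
          have := log_le_sub_one_of_pos (x := ((s + 1 : ℕ) : ℝ)) (by positivity)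
          push_cast at this ⊢; linarith
  have hmax : ((max 3 s : ℕ) : ℝ) ≤ 3 * s := by
    exact_mod_cast (max_le (by omega) (by omega) : max 3 s ≤ 3 * s)
  have hsq : ((s * s : ℕ) : ℝ) ≤ n := by exact_mod_cast Nat.sqrt_le n
  push_cast at hsq
  nlinarith [log_natCast_nonneg n]

/-- Pointwise domination of the maximal functions: sup_N S_N f(x) ≤ C sup_N A_N f(x)
for nonnegative f; formalized as: any upper bound c for all the A_M f(x) gives, after
multiplication by C, an upper bound for each S_N f(x). -/
theorem unweighted_dominated_by_weighted :
    ∃ C : ℝ, 0 < C ∧ ∀ f : ℤ → ℝ, (∀ x, 0 ≤ f x) → ∀ x : ℤ,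
      ∀ N : ℕ, 3 ≤ N → ∀ c : ℝ,
        (∀ M : ℕ, 3 ≤ M → primeAvg M f x ≤ c) →
        unweightedPrimeAvg N f x ≤ C * c := by
  refine ⟨8 * log 4, by positivity, fun f hf x N hN c hc => ?_⟩
  set M := max 3 (Nat.sqrt N)
  set small := (oddPrimesLE N).filter (fun p => p * p ≤ N)
  set large := (oddPrimesLE N).filter (fun p => ¬ p * p ≤ N)
  have hsmall : 1 * ∑ p ∈ small, f (x - p) ≤ log 4 * M * c :=
    mul_sum_le_of_le_log hf (by omega) (hc M (le_max_left _ _))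
      ((filter_mul_self_le_subset N).trans (oddPrimesLE_mono (le_max_right _ _)))
      fun p hp => one_le_log_of_mem_oddPrimesLE (filter_subset _ _ hp)
  have hlarge : log N / 2 * ∑ p ∈ large, f (x - p) ≤ log 4 * N * c :=
    mul_sum_le_of_le_log hf (by omega) (hc N hN) (filter_subset _ _) fun p hp => by
      linarith [log_le_two_mul_log_of_lt_mul_self (by omega) (not_le.1 (mem_filter.1 hp).2)]
  have hc0 : 0 ≤ c := (primeAvg_nonneg hf 3 x).trans (hc 3 le_rfl)
  have hN0 : (0 : ℝ) < N := by exact_mod_cast (show 0 < N by omega)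
  rw [unweightedPrimeAvg, ← sum_filter_add_sum_filter_not _ (fun p => p * p ≤ N),
    div_mul_eq_mul_div, div_le_iff₀ hN0]
  calc log N * (∑ p ∈ small, f (x - p) + ∑ p ∈ large, f (x - p))
      = log N * (1 * ∑ p ∈ small, f (x - p)) + 2 * (log N / 2 * ∑ p ∈ large, f (x - p)) := by
        ring
    _ ≤ log N * (log 4 * M * c) + 2 * (log 4 * N * c) := by grw [hsmall, hlarge]
    _ = log 4 * c * (log N * M) + 2 * (log 4 * N * c) := by ring
    _ ≤ log 4 * c * (6 * N) + 2 * (log 4 * N * c) := by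
        grw [log_mul_max_three_sqrt_le (by omega : 0 < N)]
    _ = 8 * log 4 * c * N := by ring
end
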